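/- Let β > 0 and u, v ∈ (0,1). The Hessian matrix H = [[-1/(4u(1-u)) + β/4, β/4],[β/4, -1/(4v(1-v)) + β/4]] has positive determinant if and only if u(1-u) + v(1-v) < 1/β. Moreover, if u(1-u) + v(1-v) < 1/β then also -1/(4u(1-u)) + β/4 < 0, so H is negative definite. -/

import Mathlib

/-!
Writing `p = u(1-u)` and `q = v(1-v)`, both positive, one computes
`det H = (1 - β(p + q)) / (16pq)`, which gives the equivalence. If `β(p + q) < 1` then in
particular `βp < 1`, i.e. `H₀₀ < 0`; a symmetric `2 × 2` matrix with negative top-left entry and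
positive determinant is negative definite, by completing the square.
-/

open Matrix

theorem Matrix.posDef_fin_two_of {a b c : ℝ} (ha : 0 < a) (hdet : 0 < (!![a, b; b, c]).det) :
    (!![a, b; b, c]).PosDef := by
  rw [det_fin_two_of] at hdet
  refine posDef_iff_dotProduct_mulVec.mpr ⟨?_, fun w hw ↦ ?_⟩
  · ext i j
    fin_cases i <;> fin_cases j <;> rfl
  have hquad : star w ⬝ᵥ (!![a, b; b, c] *ᵥ w)
      = a * w 0 ^ 2 + 2 * b * w 0 * w 1 + c * w 1 ^ 2 := by
    simp only [dotProduct, Pi.star_apply, star_trivial, cons_mulVec, Fin.sum_univ_two,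
      cons_val_zero, cons_val_one, cons_val_fin_one, empty_mulVec]
    ring
  rw [hquad]
  rcases eq_or_ne (w 1) 0 with h1 | h1
  · have h0 : w 0 ≠ 0 := fun h0 ↦ hw (by ext i; fin_cases i <;> simp [h0, h1])
    rw [h1]
    nlinarith [sq_pos_of_ne_zero h0]
  · -- `a Q(w) = (a w₀ + b w₁)² + (ac - b²) w₁²`
    nlinarith [sq_nonneg (a * w 0 + b * w 1), mul_pos hdet (sq_pos_of_ne_zero h1)]

theorem Matrix.neg_posDef_fin_two_of {a b c : ℝ} (ha : a < 0) (hdet : 0 < (!![a, b; b, c]).det) :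
    (-!![a, b; b, c]).PosDef := by
  have hneg : -!![a, b; b, c] = !![-a, -b; -b, -c] := by
    ext i j; fin_cases i <;> fin_cases j <;> rfl
  rw [hneg]
  refine posDef_fin_two_of (neg_pos.mpr ha) ?_
  simpa [det_fin_two_of] using hdet

section Hessian

variable {β p q : ℝ}

theorem det_hessian_eq (hp : p ≠ 0) (hq : q ≠ 0) :
    (!![-(1 / (4 * p)) + β / 4, β / 4; β / 4, -(1 / (4 * q)) + β / 4]).det
      = (1 - β * (p + q)) / (16 * p * q) := by
  rw [det_fin_two_of]
  field_simp
  ring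

theorem det_hessian_pos_iff (hβ : 0 < β) (hp : 0 < p) (hq : 0 < q) :
    0 < (!![-(1 / (4 * p)) + β / 4, β / 4; β / 4, -(1 / (4 * q)) + β / 4]).det
      ↔ p + q < 1 / β := by
  rw [det_hessian_eq hp.ne' hq.ne', div_pos_iff_of_pos_right (by positivity), sub_pos,
    lt_div_iff₀ hβ, mul_comm]

theorem neg_one_div_four_mul_add_lt_zero (hp : 0 < p) (h : β * p < 1) :
    -(1 / (4 * p)) + β / 4 < 0 := by
  rw [neg_add_lt_iff_lt_add, add_zero, div_lt_div_iff₀ (by norm_num) (by positivity)]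
  nlinarith

end Hessian

/-- Let `β > 0` and `u, v ∈ (0,1)`. The Hessian matrix
`H = [[-1/(4u(1-u)) + β/4, β/4], [β/4, -1/(4v(1-v)) + β/4]]` has positive determinant
iff `u(1-u) + v(1-v) < 1/β`; moreover if `u(1-u) + v(1-v) < 1/β` then also
`-1/(4u(1-u)) + β/4 < 0`, so `H` is negative definite (i.e. `-H` is positive definite). -/
theorem stmt11 (β : ℝ) (hβ : 0 < β) (u v : ℝ)
    (hu : u ∈ Set.Ioo (0:ℝ) 1) (hv : v ∈ Set.Ioo (0:ℝ) 1)
    (H : Matrix (Fin 2) (Fin 2) ℝ)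
    (hH : H = !![-(1 / (4 * u * (1 - u))) + β/4, β/4;
                 β/4, -(1 / (4 * v * (1 - v))) + β/4]) :
    (0 < H.det ↔ u * (1 - u) + v * (1 - v) < 1/β) ∧
    (u * (1 - u) + v * (1 - v) < 1/β →
      (-(1 / (4 * u * (1 - u))) + β/4 < 0) ∧ (-H).PosDef) := by
  have hp : 0 < u * (1 - u) := mul_pos hu.1 (sub_pos.mpr hu.2)
  have hq : 0 < v * (1 - v) := mul_pos hv.1 (sub_pos.mpr hv.2)
  simp only [mul_assoc (4 : ℝ)] at hH ⊢
  subst hH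
  refine ⟨det_hessian_pos_iff hβ hp hq, fun h ↦ ?_⟩
  have h00 : -(1 / (4 * (u * (1 - u)))) + β / 4 < 0 := by
    refine neg_one_div_four_mul_add_lt_zero hp ?_
    rw [lt_div_iff₀ hβ] at h
    nlinarith
  exact ⟨h00, neg_posDef_fin_two_of h00 ((det_hessian_pos_iff hβ hp hq).mpr h)⟩
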